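/- For the stochastic mass action system with species $(A,B,C)$ and reactions $A+B\to B+C$, $B+C\to 2B$, $2B\to B+C$, $C\to A$: if $X_2(0)\geq 1$ and $X_1(0)+X_2(0)+X_3(0)\geq 2$, then every state reachable from $X(0)$ has $x_2\geq 1$, and no extinction set for any reaction is reachable from $X(0)$; in particular no extinction event can occur. -/

import Mathlib

open Finset

/-- A state: copy-numbers of the `d` species. -/
abbrev State (d : ℕ) := Fin d → ℕ

/-- A reaction: a pair (source complex, product complex). -/
abbrev Rxn (d : ℕ) := (State d) × (State d)

/-- A reaction with source `y` is active at `x` iff `x ≥ y` componentwise. -/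
def active {d : ℕ} (y x : State d) : Prop := ∀ i, y i ≤ x i

/-- One-step reachability: from `x` jump to `x + y' - y` whenever `x ≥ y` for a reaction `y → y'`. -/
def step {d : ℕ} (R : List (Rxn d)) (x x' : State d) : Prop :=
  ∃ r ∈ R, active r.1 x ∧ ∀ i, x' i + r.1 i = x i + r.2 i

/-- Reachability: reflexive-transitive closure of one-step reachability. -/
def reach {d : ℕ} (R : List (Rxn d)) : State d → State d → Prop :=
  Relation.ReflTransGen (step R)

/-- A set is closed if no state outside it is reachable from inside it. -/
def closedSet {d : ℕ} (R : List (Rxn d)) (Γ : Set (State d)) : Prop :=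
  ∀ x ∈ Γ, ∀ x', reach R x x' → x' ∈ Γ

/-- An extinction set for a reaction: a closed set on which the reaction is never active. -/
def extinctionSet {d : ℕ} (R : List (Rxn d)) (r : Rxn d) (Γ : Set (State d)) : Prop :=
  closedSet R Γ ∧ ∀ x ∈ Γ, ¬ active r.1 x

/-- No extinction set for `r` is reachable from `x`. -/
def noExtSetReachable {d : ℕ} (R : List (Rxn d)) (r : Rxn d) (x : State d) : Prop :=
  ∀ Γ : Set (State d), extinctionSet R r Γ → ∀ x' ∈ Γ, ¬ reach R x x'

/-- The network A+B → B+C, B+C → 2B, 2B → B+C, C → A. -/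
def N3 : List (Rxn 3) :=
  [(![1,1,0], ![0,1,1]), (![0,1,1], ![0,2,0]), (![0,2,0], ![0,1,1]), (![0,0,1], ![1,0,0])]

/-!
Every reaction of `N3` conserves the total mass, and every reaction consuming `B` also produces
it, so `B ≥ 1` and the mass `m ≥ 2` persist along every path. From any such state a state with
`B ≥ 1` and `C ≥ 1` is at most one step away (fire `A + B → B + C`, or `2B → B + C` when `A = 0`),
and from there each reaction becomes active after at most one more step. A reachable extinction
set would therefore contain a state at which its reaction is active, which is absurd.
-/

section General

variable {d : ℕ} {R : List (Rxn d)}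

theorem step_of_active {r : Rxn d} {x : State d} (hr : r ∈ R) (ha : active r.1 x) :
    step R x (fun i => x i + r.2 i - r.1 i) :=
  ⟨r, hr, ha, fun i => Nat.sub_add_cancel (Nat.le_add_right_of_le (ha i))⟩

theorem reach.invariant {P : State d → Prop} (hP : ∀ x x', step R x x' → P x → P x')
    {x x' : State d} (h : reach R x x') (hx : P x) : P x' := by
  induction h with
  | refl => exact hx
  | tail _ hs ih => exact hP _ _ hs ih

theorem sum_eq_of_reach (hR : ∀ r ∈ R, ∑ i, r.1 i = ∑ i, r.2 i) {x x' : State d}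
    (h : reach R x x') : ∑ i, x' i = ∑ i, x i := by
  refine reach.invariant (P := fun y => ∑ i, y i = ∑ i, x i) ?_ h rfl
  rintro y y' ⟨r, hr, -, he⟩ hy
  have hsum : ∑ i, y' i + ∑ i, r.1 i = ∑ i, y i + ∑ i, r.2 i := by
    simp only [← sum_add_distrib, he]
  rw [hR r hr] at hsum
  omega

theorem one_le_of_reach {j : Fin d} (hR : ∀ r ∈ R, r.1 j = 0 ∨ 1 ≤ r.2 j) {x x' : State d}
    (h : reach R x x') (hx : 1 ≤ x j) : 1 ≤ x' j := by
  refine reach.invariant (P := fun y => 1 ≤ y j) ?_ h hx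
  rintro y y' ⟨r, hr, ha, he⟩ hy
  have := he j
  have := ha j
  rcases hR r hr with h0 | h1 <;> omega

theorem noExtSetReachable_of_forall_reach {r : Rxn d} {x : State d}
    (h : ∀ x', reach R x x' → ∃ x'', reach R x' x'' ∧ active r.1 x'') :
    noExtSetReachable R r x := by
  rintro Γ ⟨hclosed, hinactive⟩ x' hx' hreach
  obtain ⟨x'', hx'x'', hactive⟩ := h x' hreach
  exact hinactive x'' (hclosed x' hx' x'' hx'x'') hactive

end General

theorem N3_conserves_mass : ∀ r ∈ N3, ∑ i, r.1 i = ∑ i, r.2 i := by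
  simp [N3, Fin.sum_univ_three]

theorem N3_regenerates_B : ∀ r ∈ N3, r.1 1 = 0 ∨ 1 ≤ r.2 1 := by
  simp [N3]

theorem active_three_iff {y x : State 3} : active y x ↔ y 0 ≤ x 0 ∧ y 1 ≤ x 1 ∧ y 2 ≤ x 2 := by
  simp [active, Fin.forall_fin_succ]

theorem N3_exists_reach_B_C {x : State 3} (hB : 1 ≤ x 1) (hm : 2 ≤ x 0 + x 1 + x 2) :
    ∃ y, reach N3 x y ∧ 1 ≤ y 1 ∧ 1 ≤ y 2 := by
  by_cases hC : 1 ≤ x 2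
  · exact ⟨x, .refl, hB, hC⟩
  by_cases hA : 1 ≤ x 0
  · refine ⟨_, .single (step_of_active (r := (![1,1,0], ![0,1,1])) (by simp [N3]) ?_), ?_⟩
    · simp only [active_three_iff, Matrix.cons_val]; omega
    · simp only [Matrix.cons_val]; omega
  · refine ⟨_, .single (step_of_active (r := (![0,2,0], ![0,1,1])) (by simp [N3]) ?_), ?_⟩
    · simp only [active_three_iff, Matrix.cons_val]; omega
    · simp only [Matrix.cons_val]; omega

theorem N3_exists_reach_active {x : State 3} (hB : 1 ≤ x 1) (hm : 2 ≤ x 0 + x 1 + x 2) :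
    ∀ r ∈ N3, ∃ x', reach N3 x x' ∧ active r.1 x' := by
  obtain ⟨y, hxy, hyB, hyC⟩ := N3_exists_reach_B_C hB hm
  have hCA : step N3 y _ := step_of_active (r := (![0,0,1], ![1,0,0])) (by simp [N3])
    (by simp only [active_three_iff, Matrix.cons_val]; omega)
  have hBC : step N3 y _ := step_of_active (r := (![0,1,1], ![0,2,0])) (by simp [N3])
    (by simp only [active_three_iff, Matrix.cons_val]; omega)
  simp only [N3, List.mem_cons, List.not_mem_nil, or_false, forall_eq_or_imp, forall_eq]
  refine ⟨⟨_, hxy.tail hCA, ?_⟩, ⟨y, hxy, ?_⟩, ⟨_, hxy.tail hBC, ?_⟩, ⟨y, hxy, ?_⟩⟩ <;>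
    simp only [active_three_iff, Matrix.cons_val] <;> omega

/-- If `X₂(0) ≥ 1` and the conserved mass is at least 2, then every reachable state has
`x₂ ≥ 1` and no extinction set for any reaction is reachable: no extinction event can occur. -/
theorem no_extinction_N3 (x0 : State 3)
    (hb : 1 ≤ x0 1) (hm : 2 ≤ x0 0 + x0 1 + x0 2) :
    (∀ x, reach N3 x0 x → 1 ≤ x 1) ∧
    (∀ r ∈ N3, noExtSetReachable N3 r x0) := by
  have hB : ∀ x, reach N3 x0 x → 1 ≤ x 1 := fun x hx => one_le_of_reach N3_regenerates_B hx hb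
  refine ⟨hB, fun r hr => noExtSetReachable_of_forall_reach fun x hx => ?_⟩
  have hmass := sum_eq_of_reach N3_conserves_mass hx
  simp only [Fin.sum_univ_three] at hmass
  exact N3_exists_reach_active (hB x hx) (by omega) r hr
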